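/- arXiv:1710.07230 — 3 statements merged into one kernel-verified Lean document; each statement's English description precedes it below -/
import Mathlib

section
/- For any finite sets X, Y, Z in an abelian group G, the square root of the additive energy E(X ∪ Y, Z) is at most the sum of the square roots of E(X, Z) and E(Y, Z). -/
open Finset

/-- The additive energy `E(X, Y)` : the number of quadruples
`(x₁, x₂, y₁, y₂) ∈ X × X × Y × Y` with `x₁ + y₁ = x₂ + y₂`. -/
def energy {G : Type*} [AddCommGroup G] [DecidableEq G] (X Y : Finset G) : ℕ :=
  (((X ×ˢ X) ×ˢ Y ×ˢ Y).filter fun q => q.1.1 + q.2.1 = q.1.2 + q.2.2).card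

lemma energy_eq_addEnergy {G : Type*} [AddCommGroup G] [DecidableEq G] (X Y : Finset G) :
    energy X Y = Finset.addEnergy X Y := rfl

open scoped Pointwise in
lemma energy_eq_sum_sq_subset {G : Type*} [AddCommGroup G] [DecidableEq G]
    (X Z S : Finset G) (h : X + Z ⊆ S) :
    energy X Z = ∑ a ∈ S, ((X ×ˢ Z).filter fun p => p.1 + p.2 = a).card ^ 2 := by
  rw [energy_eq_addEnergy, Finset.addEnergy_eq_sum_sq']
  refine Finset.sum_subset h fun a _ ha => ?_
  have : ((X ×ˢ Z).filter fun p => p.1 + p.2 = a) = ∅ := by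
    rw [Finset.filter_eq_empty_iff]
    rintro ⟨x, z⟩ hxz rfl
    simp only [Finset.mem_product] at hxz
    exact ha (Finset.add_mem_add hxz.1 hxz.2)
  simp [this]

open scoped Pointwise

theorem sqrt_energy_union_le {G : Type*} [AddCommGroup G] [DecidableEq G]
    (X Y Z : Finset G) :
    Real.sqrt (energy (X ∪ Y) Z) ≤ Real.sqrt (energy X Z) + Real.sqrt (energy Y Z) := by
  classical
  set S := (X ∪ Y) + Z with hS
  set f : G → ℝ := fun a => ((X ×ˢ Z).filter fun p => p.1 + p.2 = a).card
  set g : G → ℝ := fun a => ((Y ×ˢ Z).filter fun p => p.1 + p.2 = a).card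
  have hf0 : ∀ a, 0 ≤ f a := fun a => Nat.cast_nonneg _
  have hg0 : ∀ a, 0 ≤ g a := fun a => Nat.cast_nonneg _
  have hEX : (energy X Z : ℝ) = ∑ a ∈ S, f a ^ 2 := by
    rw [energy_eq_sum_sq_subset X Z S
      (Finset.add_subset_add_right (Finset.subset_union_left))]
    push_cast; rfl
  have hEY : (energy Y Z : ℝ) = ∑ a ∈ S, g a ^ 2 := by
    rw [energy_eq_sum_sq_subset Y Z S
      (Finset.add_subset_add_right (Finset.subset_union_right))]
    push_cast; rfl
  have hEU : (energy (X ∪ Y) Z : ℝ) ≤ ∑ a ∈ S, (f a + g a) ^ 2 := by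
    rw [energy_eq_sum_sq_subset (X ∪ Y) Z S Finset.Subset.rfl]
    push_cast
    refine Finset.sum_le_sum fun a _ => ?_
    have hcard : (((X ∪ Y) ×ˢ Z).filter fun p => p.1 + p.2 = a).card ≤
        ((X ×ˢ Z).filter fun p => p.1 + p.2 = a).card +
        ((Y ×ˢ Z).filter fun p => p.1 + p.2 = a).card := by
      rw [Finset.union_product, Finset.filter_union]
      exact Finset.card_union_le _ _
    have : (((X ∪ Y) ×ˢ Z).filter fun p => p.1 + p.2 = a).card ^ 2
        ≤ (((X ×ˢ Z).filter fun p => p.1 + p.2 = a).card +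
           ((Y ×ˢ Z).filter fun p => p.1 + p.2 = a).card) ^ 2 :=
      Nat.pow_le_pow_left hcard 2
    calc ((((X ∪ Y) ×ˢ Z).filter fun p => p.1 + p.2 = a).card : ℝ) ^ 2
        ≤ ((((X ×ˢ Z).filter fun p => p.1 + p.2 = a).card +
           ((Y ×ˢ Z).filter fun p => p.1 + p.2 = a).card : ℕ) : ℝ) ^ 2 := by
          exact_mod_cast this
      _ = (f a + g a) ^ 2 := by push_cast; rfl
  -- Cauchy-Schwarz
  have hCS : ∑ a ∈ S, f a * g a ≤ Real.sqrt (energy X Z) * Real.sqrt (energy Y Z) := by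
    have h1 : (∑ a ∈ S, f a * g a) ^ 2 ≤ (∑ a ∈ S, f a ^ 2) * ∑ a ∈ S, g a ^ 2 :=
      Finset.sum_mul_sq_le_sq_mul_sq S f g
    have hfg : 0 ≤ ∑ a ∈ S, f a * g a :=
      Finset.sum_nonneg fun a _ => mul_nonneg (hf0 a) (hg0 a)
    have hx2 : (0:ℝ) ≤ ∑ a ∈ S, f a ^ 2 := Finset.sum_nonneg fun a _ => sq_nonneg _
    have hy2 : (0:ℝ) ≤ ∑ a ∈ S, g a ^ 2 := Finset.sum_nonneg fun a _ => sq_nonneg _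
    rw [hEX, hEY, ← Real.sqrt_mul hx2]
    exact (Real.le_sqrt hfg (mul_nonneg hx2 hy2)).mpr h1
  have key : (energy (X ∪ Y) Z : ℝ) ≤
      (Real.sqrt (energy X Z) + Real.sqrt (energy Y Z)) ^ 2 := by
    have expand : ∑ a ∈ S, (f a + g a) ^ 2
        = (∑ a ∈ S, f a ^ 2) + 2 * (∑ a ∈ S, f a * g a) + ∑ a ∈ S, g a ^ 2 := by
      simp_rw [add_sq]
      rw [Finset.sum_add_distrib, Finset.sum_add_distrib, Finset.mul_sum]
      ring_nf
    have sq1 : Real.sqrt (energy X Z) ^ 2 = (energy X Z : ℝ) :=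
      Real.sq_sqrt (Nat.cast_nonneg _)
    have sq2 : Real.sqrt (energy Y Z) ^ 2 = (energy Y Z : ℝ) :=
      Real.sq_sqrt (Nat.cast_nonneg _)
    calc (energy (X ∪ Y) Z : ℝ) ≤ ∑ a ∈ S, (f a + g a) ^ 2 := hEU
      _ = (∑ a ∈ S, f a ^ 2) + 2 * (∑ a ∈ S, f a * g a) + ∑ a ∈ S, g a ^ 2 := expand
      _ ≤ (energy X Z : ℝ) + 2 * (Real.sqrt (energy X Z) * Real.sqrt (energy Y Z))
          + (energy Y Z : ℝ) := by
        rw [hEX, hEY]; gcongr; rw [hEX, hEY] at hCS; exact hCS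
      _ = (Real.sqrt (energy X Z) + Real.sqrt (energy Y Z)) ^ 2 := by
        rw [add_sq, sq1, sq2]; ring
  calc Real.sqrt (energy (X ∪ Y) Z)
      ≤ Real.sqrt ((Real.sqrt (energy X Z) + Real.sqrt (energy Y Z)) ^ 2) :=
        Real.sqrt_le_sqrt key
    _ = Real.sqrt (energy X Z) + Real.sqrt (energy Y Z) :=
        Real.sqrt_sq (add_nonneg (Real.sqrt_nonneg _) (Real.sqrt_nonneg _))
end

section
/- Let G be a finite abelian group of cardinality N, and let n, d be natural numbers with n ≥ 2 log N. Then the number of nonempty sets X ⊆ G with |X| ≤ n and additive dimension dim(X) ≤ d is at most e^{2nd}. -/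
open Finset

/-- A finset `S` is dissociated if the only `{-1,0,1}`-combination of its
elements summing to zero is the trivial one. -/
def Dissociated {G : Type*} [AddCommGroup G] (S : Finset G) : Prop :=
  ∀ ε : G → ℤ, (∀ s ∈ S, ε s = -1 ∨ ε s = 0 ∨ ε s = 1) →
    ∑ s ∈ S, ε s • s = 0 → ∀ s ∈ S, ε s = 0

/-- The additive dimension of `A` : the size of a largest dissociated subset of `A`. -/
noncomputable def addDim {G : Type*} [AddCommGroup G] (A : Finset G) : ℕ :=
  sSup {d : ℕ | ∃ S : Finset G, S ⊆ A ∧ Dissociated S ∧ S.card = d}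

/-- `Span(S) = { ∑_{s ∈ S} ε_s s : ε_s ∈ {0, -1, 1} }`. -/
def spn {G : Type*} [AddCommGroup G] (S : Finset G) : Set G :=
  {x | ∃ ε : G → ℤ, (∀ s ∈ S, ε s = -1 ∨ ε s = 0 ∨ ε s = 1) ∧ x = ∑ s ∈ S, ε s • s}

/-!
A largest dissociated subset `S ⊆ X` spans `X`: for `x ∈ X \ S` the set `insert x S` carries a
nontrivial `{-1, 0, 1}`-relation, which must give `x` a coefficient `±1` because `S` itself is
dissociated. Hence a nonempty `X` with `|X| ≤ n` and `dim X ≤ d` is a set of at most `n` of the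
at most `3^d` signed sums of some `S` with `|S| ≤ d`. There are at most `(N + 1)^d` such `S` and,
for each, at most `(3^d)^n` such `X`, and `(N + 1) · 3^n ≤ e^{2n}` once `n ≥ 2 log N`.
-/

section Counting

variable {α : Type*} [DecidableEq α]

theorem Finset.exists_fin_image_eq {s : Finset α} {n : ℕ} (hs : s.Nonempty) (hn : #s ≤ n) :
    ∃ f : Fin n → α, univ.image f = s := by
  obtain ⟨a, ha⟩ := hs
  have : Nonempty s := ⟨⟨a, ha⟩⟩
  let e : s ↪ Fin n := s.equivFin.toEmbedding.trans (Fin.castLEEmb hn)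
  refine ⟨fun i => (Function.invFun e i).1, ?_⟩
  ext x
  simp only [mem_image, mem_univ, true_and]
  constructor
  · rintro ⟨i, rfl⟩
    exact (Function.invFun e i).2
  · intro hx
    obtain ⟨i, hi⟩ := Function.invFun_surjective e.injective ⟨x, hx⟩
    exact ⟨i, by rw [hi]⟩

theorem Finset.card_nonempty_subsets_card_le_le_pow (T : Finset α) (n : ℕ) :
    #{X ∈ T.powerset | X.Nonempty ∧ #X ≤ n} ≤ #T ^ n := by
  calc #{X ∈ T.powerset | X.Nonempty ∧ #X ≤ n}
      ≤ #((Fintype.piFinset fun _ : Fin n => T).image fun f => univ.image f) := by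
        refine card_le_card fun X hX => ?_
        simp only [mem_filter, mem_powerset] at hX
        obtain ⟨hXT, hne, hcard⟩ := hX
        obtain ⟨f, rfl⟩ := exists_fin_image_eq hne hcard
        refine mem_image.2 ⟨f, Fintype.mem_piFinset.2 fun i => ?_, rfl⟩
        exact hXT (mem_image_of_mem f (mem_univ i))
    _ ≤ #T ^ n := card_image_le.trans (by simp)

theorem Finset.card_filter_card_le_le_pow [Fintype α] (d : ℕ) :
    #{S : Finset α | #S ≤ d} ≤ (Fintype.card α + 1) ^ d := by
  calc #{S : Finset α | #S ≤ d}
      ≤ #((range (d + 1)).biUnion fun k => powersetCard k univ) :=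
        card_le_card fun S hS => by simp_all
    _ ≤ ∑ k ∈ range (d + 1), Fintype.card α ^ k * 1 ^ (d - k) * d.choose k := by
        refine card_biUnion_le.trans (sum_le_sum fun k hk => ?_)
        rw [card_powersetCard, one_pow, mul_one, card_univ]
        exact (Nat.choose_le_pow _ _).trans
          (Nat.le_mul_of_pos_right _ (Nat.choose_pos (by simpa [Nat.lt_succ_iff] using hk)))
    _ = (Fintype.card α + 1) ^ d := (add_pow _ _ _).symm

end Counting

section Dissociated

variable {G : Type*} [AddCommGroup G]

theorem dissociated_empty : Dissociated (∅ : Finset G) :=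
  fun _ _ _ _ h => absurd h (notMem_empty _)

theorem subset_spn (S : Finset G) : (S : Set G) ⊆ spn S := by
  classical
  intro x (hx : x ∈ S)
  refine ⟨Pi.single x 1, fun s _ => ?_, ?_⟩
  · by_cases h : s = x <;> simp [h]
  · simp [Pi.single_apply, ite_smul, hx]

theorem Dissociated.mem_spn_of_not_dissociated_insert [DecidableEq G] {S : Finset G} {x : G}
    (hS : Dissociated S) (hx : x ∉ S) (h : ¬Dissociated (insert x S)) : x ∈ spn S := by
  simp only [Dissociated, not_forall] at h
  obtain ⟨ε, hε, hsum, s₀, hs₀, hne⟩ := h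
  rw [sum_insert hx] at hsum
  have hεS : ∀ s ∈ S, ε s = -1 ∨ ε s = 0 ∨ ε s = 1 := fun s hs => hε s (mem_insert_of_mem hs)
  have hεx : ε x = -1 ∨ ε x = 1 := by
    rcases hε x (mem_insert_self x S) with h | h | h
    · exact .inl h
    · rw [h, zero_smul, zero_add] at hsum
      rcases mem_insert.1 hs₀ with rfl | hs₀
      · exact absurd h hne
      · exact absurd (hS ε hεS hsum s₀ hs₀) hne
    · exact .inr h
  refine ⟨fun s => -ε x * ε s, fun s hs => ?_, ?_⟩
  · rcases hεx with h | h <;> rcases hεS s hs with h' | h' | h' <;> simp [h, h']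
  · have hsq : ε x * ε x = 1 := by rcases hεx with h | h <;> simp [h]
    simp_rw [mul_smul]
    rw [← smul_sum, eq_neg_of_add_eq_zero_right hsum, smul_neg, neg_smul, neg_neg, smul_smul, hsq,
      one_smul]

theorem bddAbove_card_dissociated (X : Finset G) :
    BddAbove {d : ℕ | ∃ S : Finset G, S ⊆ X ∧ Dissociated S ∧ S.card = d} :=
  ⟨#X, fun _ ⟨_, hSX, _, hd⟩ => hd ▸ card_le_card hSX⟩

theorem card_le_addDim {S X : Finset G} (hSX : S ⊆ X) (hS : Dissociated S) : #S ≤ addDim X :=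
  le_csSup (bddAbove_card_dissociated X) ⟨S, hSX, hS, rfl⟩

theorem exists_dissociated_card_eq_addDim (X : Finset G) :
    ∃ S ⊆ X, Dissociated S ∧ #S = addDim X :=
  Nat.sSup_mem (s := {d : ℕ | ∃ S : Finset G, S ⊆ X ∧ Dissociated S ∧ S.card = d})
    ⟨0, ∅, empty_subset X, dissociated_empty, rfl⟩ (bddAbove_card_dissociated X)

theorem Dissociated.subset_spn_of_card_eq_addDim {S X : Finset G} (hSX : S ⊆ X)
    (hS : Dissociated S) (hcard : #S = addDim X) : (X : Set G) ⊆ spn S := by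
  classical
  intro x hx
  by_cases hxS : x ∈ S
  · exact subset_spn S hxS
  refine hS.mem_spn_of_not_dissociated_insert hxS fun h => ?_
  have := card_le_addDim (insert_subset hx hSX) h
  rw [card_insert_of_notMem hxS] at this
  omega

variable [DecidableEq G]

def signSums (S : Finset G) : Finset G :=
  (Fintype.piFinset fun _ : S => ({-1, 0, 1} : Finset ℤ)).image fun ε => ∑ s : S, ε s • (s : G)

theorem card_signSums_le (S : Finset G) : #(signSums S) ≤ 3 ^ #S :=
  card_image_le.trans (by simp)

theorem spn_subset_signSums (S : Finset G) : spn S ⊆ signSums S := by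
  rintro _ ⟨ε, hε, rfl⟩
  refine mem_image.2
    ⟨fun s => ε s, Fintype.mem_piFinset.2 fun s => ?_, sum_coe_sort S fun s => ε s • s⟩
  simpa using hε s s.2

end Dissociated

theorem ncard_nonempty_card_le_addDim_le {G : Type*} [AddCommGroup G] [Fintype G] (n d : ℕ) :
    {X : Finset G | X.Nonempty ∧ #X ≤ n ∧ addDim X ≤ d}.ncard ≤
      (Fintype.card G + 1) ^ d * (3 ^ d) ^ n := by
  classical
  let family : Finset (Finset G) := ({S | #S ≤ d} : Finset (Finset G)).biUnion fun S =>
    {X ∈ (signSums S).powerset | X.Nonempty ∧ #X ≤ n}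
  calc _ ≤ #family := by
        rw [← Set.ncard_coe_finset]
        refine Set.ncard_le_ncard (fun X ⟨hne, hcard, hdim⟩ => ?_) (finite_toSet _)
        obtain ⟨S, hSX, hS, hSdim⟩ := exists_dissociated_card_eq_addDim X
        have hXS : (X : Set G) ⊆ signSums S :=
          (hS.subset_spn_of_card_eq_addDim hSX hSdim).trans (spn_subset_signSums S)
        simp only [family, coe_biUnion, coe_filter, mem_univ, true_and, Set.mem_iUnion,
          Set.mem_ofPred_eq, mem_powerset]
        exact ⟨S, hSdim ▸ hdim, coe_subset.1 hXS, hne, hcard⟩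
    _ ≤ #{S : Finset G | #S ≤ d} * (3 ^ d) ^ n := by
        refine card_biUnion_le_card_mul _ _ _ fun S hS => ?_
        refine (card_nonempty_subsets_card_le_le_pow _ n).trans (Nat.pow_le_pow_left ?_ n)
        exact (card_signSums_le S).trans (Nat.pow_le_pow_right three_pos (mem_filter.1 hS).2)
    _ ≤ (Fintype.card G + 1) ^ d * (3 ^ d) ^ n :=
        Nat.mul_le_mul_right _ (card_filter_card_le_le_pow d)

theorem add_one_mul_three_pow_le_exp {N n : ℕ} (hN : 1 ≤ N) (hn : 1 ≤ n)
    (hnN : 2 * Real.log N ≤ n) : ((N : ℝ) + 1) * 3 ^ n ≤ Real.exp (2 * n) := by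
  have hN' : (1 : ℝ) ≤ N := by exact_mod_cast hN
  rw [← Real.log_le_iff_le_exp (by positivity), Real.log_mul (by positivity) (by positivity),
    Real.log_pow]
  have hlog_succ : Real.log (N + 1) ≤ Real.log 2 + Real.log N := by
    rw [← Real.log_mul two_ne_zero (by positivity)]
    exact Real.log_le_log (by positivity) (by linarith)
  have hlog3 : (n : ℝ) * Real.log 3 ≤ n * 1.0986122888 :=
    mul_le_mul_of_nonneg_left Real.log_three_lt_d9.le n.cast_nonneg
  have hlog2 := Real.log_two_lt_d9
  rcases hN.eq_or_lt with hN1 | hN2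
  · have : Real.log N = 0 := by simp [← hN1]
    have : (1 : ℝ) ≤ n := by exact_mod_cast hn
    linarith
  · have hn2 : (2 : ℝ) ≤ n := by
      have : Real.log 2 ≤ Real.log N := Real.log_le_log two_pos (by exact_mod_cast hN2)
      have : 1 < n := by exact_mod_cast (show (1 : ℝ) < n by linarith [Real.log_two_gt_d9])
      exact_mod_cast this
    linarith

theorem count_small_dim_sets {G : Type*} [AddCommGroup G] [Fintype G]
    (N n d : ℕ) (hN : N = Fintype.card G) (hn : 2 * Real.log N ≤ (n : ℝ)) :
    ({X : Finset G | X.Nonempty ∧ X.card ≤ n ∧ addDim X ≤ d}.ncard : ℝ) ≤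
      Real.exp (2 * n * d) := by
  rcases Nat.eq_zero_or_pos n with rfl | hn1
  · have hempty : {X : Finset G | X.Nonempty ∧ X.card ≤ 0 ∧ addDim X ≤ d} = ∅ :=
      Set.eq_empty_of_forall_notMem fun X ⟨hX, hcard, _⟩ =>
        hX.ne_empty (card_eq_zero.1 (Nat.le_zero.1 hcard))
    rw [hempty, Set.ncard_empty, Nat.cast_zero]
    positivity
  have hN1 : 1 ≤ N := hN ▸ Fintype.card_pos
  calc _ ≤ (((N + 1) ^ d * (3 ^ d) ^ n : ℕ) : ℝ) := by
        exact_mod_cast hN ▸ ncard_nonempty_card_le_addDim_le n d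
    _ = (((N : ℝ) + 1) * 3 ^ n) ^ d := by
        push_cast
        rw [mul_pow, ← pow_mul, ← pow_mul, mul_comm n d]
    _ ≤ Real.exp (2 * n) ^ d :=
        pow_le_pow_left₀ (by positivity) (add_one_mul_three_pow_le_exp hN1 hn1 hn) d
    _ = Real.exp (2 * n * d) := by rw [← Real.exp_nat_mul]; ring_nf
end

section
/- Let G be a finite abelian group, X, Y ⊆ G finite nonempty sets with |X| = n, and ε ∈ (0, 1/2]. If E(X, Y) = |X|²|Y|/K, then there exist k > ε²|Y|K/n and elements y₁, ..., y_k ∈ Y such that for each i = 2, ..., k, the set (X + y_i) intersected with the union of (X + y_j) over j < i has size at most εn. -/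
open Finset

section helpers
variable {G : Type*} [AddCommGroup G] [DecidableEq G]

lemma filter_lt_castSucc {k : ℕ} (i : Fin k) :
    (univ.filter fun j : Fin (k+1) => j < i.castSucc) =
      (univ.filter fun j : Fin k => j < i).image Fin.castSucc := by
  ext j
  simp only [mem_filter, mem_univ, true_and, mem_image]
  constructor
  · intro hj
    have hne : j ≠ Fin.last k := by
      intro h
      subst h
      exact absurd (hj.trans (Fin.castSucc_lt_last i)) (lt_irrefl _)
    obtain ⟨j', rfl⟩ := Fin.exists_castSucc_eq.mpr hne
    exact ⟨j', by simpa [Fin.castSucc_lt_castSucc_iff] using hj, rfl⟩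
  · rintro ⟨j', hj', rfl⟩
    simpa [Fin.castSucc_lt_castSucc_iff] using hj'

lemma filter_lt_last {k : ℕ} :
    (univ.filter fun j : Fin (k+1) => j < Fin.last k) = univ.image Fin.castSucc := by
  ext j
  simp only [mem_filter, mem_univ, true_and, mem_image, Fin.lt_last_iff_ne_last]
  constructor
  · intro h
    obtain ⟨j', rfl⟩ := Fin.exists_castSucc_eq.mpr h
    exact ⟨j', rfl⟩
  · rintro ⟨j', rfl⟩
    exact (Fin.castSucc_lt_last j').ne

lemma image_inter_eq (X U : Finset G) (z : G) :
    (X.image (· + z)) ∩ U = (X.filter fun x => x + z ∈ U).image (· + z) := by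
  ext u
  simp only [mem_inter, mem_image, mem_filter]
  constructor
  · rintro ⟨⟨x, hx, rfl⟩, hu⟩
    exact ⟨x, ⟨hx, hu⟩, rfl⟩
  · rintro ⟨x, ⟨hx, hu⟩, rfl⟩
    exact ⟨⟨x, hx, rfl⟩, hu⟩

end helpers

set_option maxHeartbeats 2000000 in
theorem exists_spread_translates {G : Type*} [AddCommGroup G] [DecidableEq G]
    (X Y : Finset G) (hX : X.Nonempty) (hY : Y.Nonempty) (n : ℕ) (hn : X.card = n)
    (ε K : ℝ) (hε : 0 < ε) (hε' : ε ≤ 1 / 2) (hK : 0 < K)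
    (hE : (energy X Y : ℝ) = (X.card : ℝ) ^ 2 * Y.card / K) :
    ∃ k : ℕ, ε ^ 2 * Y.card * K / n < (k : ℝ) ∧
      ∃ y : Fin k → G, (∀ i, y i ∈ Y) ∧
        ∀ i : Fin k, 0 < (i : ℕ) →
          ((((X.image (· + y i)) ∩
              (Finset.univ.filter fun j : Fin k => j < i).biUnion
                fun j => X.image (· + y j)).card : ℝ) ≤ ε * n) := by
  classical
  have hn1 : 1 ≤ n := hn ▸ card_pos.mpr hX
  have hn0 : (0 : ℝ) < n := by exact_mod_cast hn1
  have hY0 : (0 : ℝ) < Y.card := by exact_mod_cast hY.card_pos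
  -- the greedy predicate
  set q : ℕ → Prop := fun m => ∃ y : Fin m → G, (∀ i, y i ∈ Y) ∧ Function.Injective y ∧
      ∀ i : Fin m, ((((X.image (· + y i)) ∩
            (Finset.univ.filter fun j : Fin m => j < i).biUnion
              fun j => X.image (· + y j)).card : ℝ) ≤ ε * n) with hqdef
  have hq1 : q 1 := by
    obtain ⟨y₀, hy₀⟩ := hY
    refine ⟨fun _ => y₀, fun _ => hy₀, fun a b _ => Subsingleton.elim a b, fun i => ?_⟩
    have : (Finset.univ.filter fun j : Fin 1 => j < i) = ∅ := by
      apply filter_eq_empty_iff.mpr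
      intro j _
      simp [Subsingleton.elim j i]
    rw [this]
    simp only [biUnion_empty, inter_empty, card_empty, Nat.cast_zero]
    positivity
  set k := Nat.findGreatest q Y.card with hkdef
  have hk1 : 1 ≤ k := Nat.le_findGreatest hY.card_pos hq1
  obtain ⟨y, hyY, hyinj, hsp⟩ : q k := Nat.findGreatest_spec hY.card_pos hq1
  refine ⟨k, ?_, y, hyY, fun i _ => hsp i⟩
  -- the union of all translates
  set U : Finset G := Finset.univ.biUnion (fun j : Fin k => X.image (· + y j)) with hUdef
  have hUcard : U.card ≤ k * n := by
    refine le_trans card_biUnion_le ?_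
    calc ∑ j : Fin k, (X.image (· + y j)).card ≤ ∑ _j : Fin k, n := by
          refine Finset.sum_le_sum fun j _ => ?_
          exact le_trans (card_image_le) (le_of_eq hn)
      _ = k * n := by simp [mul_comm]
  -- no good extension of length k+1 exists
  have hnotq : ¬ q (k + 1) := by
    intro hq
    by_cases hb : k + 1 ≤ Y.card
    · exact Nat.findGreatest_is_greatest (Nat.lt_succ_self k) hb hq
    · obtain ⟨y', hy', hinj', -⟩ := hq
      apply hb
      calc k + 1 = (Finset.univ : Finset (Fin (k+1))).card := by simp
        _ = (Finset.univ.image y').card := (card_image_of_injective _ hinj').symm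
        _ ≤ Y.card := by
            refine card_le_card fun g hg => ?_
            obtain ⟨i, -, rfl⟩ := mem_image.mp hg
            exact hy' i
  -- stuck: every z ∈ Y has big intersection with U
  have hstuck : ∀ z ∈ Y, ε * n < (((X.image (· + z)) ∩ U).card : ℝ) := by
    intro z hz
    by_contra hle
    push_neg at hle
    have hz' : ∀ j : Fin k, y j ≠ z := by
      intro j hj
      have hsub : X.image (· + z) ⊆ U := by
        rw [← hj]
        exact Finset.subset_biUnion_of_mem (fun j => X.image (· + y j)) (mem_univ j)
      have hcard : ((X.image (· + z)) ∩ U).card = n := by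
        rw [inter_eq_left.mpr hsub, card_image_of_injective _ (add_left_injective z), hn]
      rw [hcard] at hle
      nlinarith
    have hinj' : Function.Injective (Fin.snoc y z : Fin (k+1) → G) := by
      intro a b hab
      induction a using Fin.lastCases with
      | last =>
        induction b using Fin.lastCases with
        | last => rfl
        | cast j =>
          rw [Fin.snoc_last, Fin.snoc_castSucc] at hab
          exact absurd hab.symm (hz' j)
      | cast i =>
        induction b using Fin.lastCases with
        | last =>
          rw [Fin.snoc_castSucc, Fin.snoc_last] at hab
          exact absurd hab (hz' i)
        | cast j =>
          rw [Fin.snoc_castSucc, Fin.snoc_castSucc] at hab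
          exact congrArg _ (hyinj hab)
    apply hnotq
    refine ⟨Fin.snoc y z, ?_, hinj', ?_⟩
    · intro i
      induction i using Fin.lastCases with
      | last => rw [Fin.snoc_last]; exact hz
      | cast i => rw [Fin.snoc_castSucc]; exact hyY i
    · intro i
      induction i using Fin.lastCases with
      | last =>
        rw [Fin.snoc_last, filter_lt_last, image_biUnion]
        simp only [Fin.snoc_castSucc]
        exact hle
      | cast i =>
        rw [Fin.snoc_castSucc, filter_lt_castSucc, image_biUnion]
        simp only [Fin.snoc_castSucc]
        exact hsp i
  -- counting
  set S : ℕ := ((X ×ˢ Y).filter fun p => p.1 + p.2 ∈ U).card with hSdef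
  have hSsum : S = ∑ z ∈ Y, ((X.image (· + z)) ∩ U).card := by
    rw [hSdef, card_filter, Finset.sum_product, Finset.sum_comm]
    refine Finset.sum_congr rfl fun z _ => ?_
    rw [image_inter_eq, card_image_of_injective _ (add_left_injective z), card_filter]
  have hSlb : ε * n * Y.card < (S : ℝ) := by
    have h1 : ∑ _z ∈ Y, (ε * n) < ∑ z ∈ Y, (((X.image (· + z)) ∩ U).card : ℝ) :=
      Finset.sum_lt_sum_of_nonempty hY fun z hz => hstuck z hz
    rw [Finset.sum_const, nsmul_eq_mul] at h1
    have h2 : ((S : ℕ) : ℝ) = ∑ z ∈ Y, (((X.image (· + z)) ∩ U).card : ℝ) := by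
      rw [hSsum]; push_cast; ring
    rw [h2]
    linarith
  have hCS : (S : ℝ) ^ 2 ≤ (U.card : ℝ) * (energy X Y : ℝ) := by
    have h := Finset.card_sq_le_card_mul_addEnergy X Y U
    have heq : ((X ×ˢ Y).filter fun (a, b) => a + b ∈ U)
        = ((X ×ˢ Y).filter fun p => p.1 + p.2 ∈ U) := by
      apply Finset.filter_congr
      rintro ⟨a, b⟩ _
      rfl
    rw [heq] at h
    rw [energy_eq_addEnergy]
    exact_mod_cast h
  have hE' : (energy X Y : ℝ) = (n : ℝ) ^ 2 * Y.card / K := by rw [hE, hn]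
  have hEnn : (0 : ℝ) ≤ (n : ℝ) ^ 2 * Y.card / K := by positivity
  have h1 : (ε * n * Y.card) ^ 2 < ((k : ℝ) * n) * ((n : ℝ) ^ 2 * Y.card / K) := by
    calc (ε * n * Y.card) ^ 2 < (S : ℝ) ^ 2 := by
          refine pow_lt_pow_left₀ hSlb ?_ (by norm_num)
          positivity
      _ ≤ (U.card : ℝ) * (energy X Y : ℝ) := hCS
      _ ≤ ((k : ℝ) * n) * ((n : ℝ) ^ 2 * Y.card / K) := by
          rw [hE']
          refine mul_le_mul_of_nonneg_right ?_ hEnn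
          exact_mod_cast hUcard
  have h1K : (ε * n * Y.card) ^ 2 * K < ((k : ℝ) * n) * ((n : ℝ) ^ 2 * Y.card) := by
    have h2 := mul_lt_mul_of_pos_right h1 hK
    have h3 : (k : ℝ) * n * ((n : ℝ) ^ 2 * Y.card / K) * K = (k : ℝ) * n * ((n : ℝ) ^ 2 * Y.card) := by
      field_simp
    rw [h3] at h2
    linarith
  rw [div_lt_iff₀ hn0]
  have hc : (0 : ℝ) < (n : ℝ) ^ 2 * Y.card := by positivity
  refine lt_of_mul_lt_mul_right ?_ hc.le
  calc ε ^ 2 * Y.card * K * ((n : ℝ) ^ 2 * Y.card) = (ε * n * Y.card) ^ 2 * K := by ring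
    _ < ((k : ℝ) * n) * ((n : ℝ) ^ 2 * Y.card) := h1K
    _ = (k : ℝ) * n * ((n : ℝ) ^ 2 * Y.card) := by ring
end
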